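/- Let f : ℝ × (0, ∞) → ℝ be continuous and satisfy: (a) for every 0 < a < b there is L > 0 with |f(x, r₁) − f(x, r₂)| ≤ L|r₁ − r₂| for all x ∈ ℝ and r₁, r₂ ∈ [a, b]; (b) there exist δ > 0 and c > 0 with f(x, r) ≥ c/(2r) for all x ∈ ℝ and 0 < r < δ; (c) there exists R₀ > δ with f(x, r) ≤ −1/2 for all x ∈ ℝ and r ≥ R₀; (d) there exists K > 0 with |f(x, r)| ≤ K for all x ∈ ℝ and r ≥ δ. For t ∈ ℝ let 𝓖⁻(t) denote the set of differentiable r : (−∞, t] → (0, ∞) with r′(x) = f(x, r(x)) for all x ≤ t and r(x) → +∞ as x → −∞. Then there exist constants 0 < m ≤ M and a differentiable R⁻ : ℝ → ℝ with m ≤ R⁻(x) ≤ M and R⁻′(x) = f(x, R⁻(x)) for all x ∈ ℝ, such that for every t ∈ ℝ, R⁻(t) = inf { r(t) : r ∈ 𝓖⁻(t) }. -/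

import Mathlib

open Filter

/-- The family `𝓖⁻(t)` of positive solutions of `r' = f(x, r)` on `(-∞, t]`
tending to `+∞` as `x → -∞` (incoming characteristics from spatial infinity). -/
def incomingSolutions (f : ℝ → ℝ → ℝ) (t : ℝ) : Set (ℝ → ℝ) :=
  {r | (∀ x ∈ Set.Iic t, 0 < r x) ∧
       (∀ x ∈ Set.Iic t, HasDerivWithinAt r (f x (r x)) (Set.Iic t) x) ∧
       Tendsto r atBot atTop}

/-!
`R⁻(t)` is the infimum of the values at time `t` of the incoming solutions. Every incoming solution
stays above `δ`, because `f > 0` below `δ`; and truncating `f` below `R₀` and solving backwards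
(where `f ≤ -1/2` forces linear growth) yields an incoming solution through `(t, R₀)`. Hence
`δ ≤ R⁻ ≤ R₀`. Let `ρ` solve the equation forward from `(s, R⁻(s))`. Solutions do not cross and
incoming solutions at time `t` are incoming at time `s`, so `ρ ≤ R⁻` after `s`; conversely an
incoming solution almost realising `R⁻(s)` extends forward and, by Gronwall, stays close to `ρ`,
so `R⁻ ≤ ρ`. Thus `R⁻` agrees near every time with a solution.
-/

open Set Topology
open scoped NNReal

section IntegralCurve

variable {E : Type*} [NormedAddCommGroup E] [NormedSpace ℝ E] {v : ℝ → E → E}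

theorem IsIntegralCurveOn.hasDerivWithinAt_Ici {γ : ℝ → E} {s : Set ℝ} {a b : ℝ}
    (h : IsIntegralCurveOn γ v s) (hs : Icc a b ⊆ s) :
    ∀ x ∈ Ico a b, HasDerivWithinAt γ (v x (γ x)) (Ici x) x := fun x hx =>
  ((h x (hs (Ico_subset_Icc_self hx))).mono hs).mono_of_mem_nhdsWithin (Icc_mem_nhdsGE_of_mem hx)

theorem IsIntegralCurveOn.hasDerivWithinAt_Iic {γ : ℝ → E} {s : Set ℝ} {a b : ℝ}
    (h : IsIntegralCurveOn γ v s) (hs : Icc a b ⊆ s) :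
    ∀ x ∈ Ioc a b, HasDerivWithinAt γ (v x (γ x)) (Iic x) x := fun x hx =>
  ((h x (hs (Ioc_subset_Icc_self hx))).mono hs).mono_of_mem_nhdsWithin (Icc_mem_nhdsLE_of_mem hx)

theorem IsIntegralCurveOn.congr {γ γ' : ℝ → E} {s : Set ℝ} (h : IsIntegralCurveOn γ v s)
    (heq : EqOn γ' γ s) : IsIntegralCurveOn γ' v s := fun x hx => by
  simpa only [heq hx] using (h x hx).congr heq (heq hx)

theorem IsIntegralCurveOn.piecewise_Iic {γ₁ γ₂ : ℝ → E} {s t : ℝ}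
    (h₁ : IsIntegralCurveOn γ₁ v (Iic s)) (h₂ : IsIntegralCurveOn γ₂ v (Icc s t))
    (hs : γ₁ s = γ₂ s) : IsIntegralCurveOn (fun x => if x ≤ s then γ₁ x else γ₂ x) v (Iic t) := by
  set γ := fun x => if x ≤ s then γ₁ x else γ₂ x
  have h₁' : IsIntegralCurveOn γ v (Iic s) := h₁.congr fun x hx => if_pos hx
  have h₂' : IsIntegralCurveOn γ v (Icc s t) := h₂.congr fun x hx => by
    rcases hx.1.eq_or_lt with rfl | hlt
    · exact (if_pos le_rfl).trans hs
    · exact if_neg hlt.not_ge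
  intro x hx
  rcases lt_trichotomy x s with hlt | rfl | hgt
  · exact (h₁' x hlt.le).mono_of_mem_nhdsWithin (mem_nhdsWithin_of_mem_nhds (Iic_mem_nhds hlt))
  · simpa only [Iic_union_Icc_eq_Iic (show x ≤ t from hx)] using
      (h₁' x self_mem_Iic).union (h₂' x ⟨le_rfl, hx⟩)
  · refine (h₂' x ⟨hgt.le, hx⟩).mono_of_mem_nhdsWithin ?_
    rw [← Iic_inter_Ici]
    exact inter_mem_nhdsWithin _ (Ici_mem_nhds hgt)

theorem exists_isIntegralCurveOn_Iic {t : ℝ} (γ : ℕ → ℝ → E)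
    (hγ : ∀ n : ℕ, IsIntegralCurveOn (γ n) v (Icc (t - n) t))
    (hcons : ∀ m n : ℕ, m ≤ n → EqOn (γ m) (γ n) (Icc (t - m) t)) :
    ∃ r : ℝ → E, (∀ n : ℕ, EqOn r (γ n) (Icc (t - n) t)) ∧ IsIntegralCurveOn r v (Iic t) := by
  have hceil : ∀ x ≤ t, x ∈ Icc (t - ⌈t - x⌉₊) t := fun x hx =>
    ⟨by linarith [Nat.le_ceil (t - x)], hx⟩
  set r := fun x => γ ⌈t - x⌉₊ x
  have hr : ∀ n : ℕ, EqOn r (γ n) (Icc (t - n) t) := fun n x hx => by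
    rcases le_total ⌈t - x⌉₊ n with h | h
    · exact hcons _ n h (hceil x hx.2)
    · exact (hcons n _ h hx).symm
  refine ⟨r, hr, fun x hx => ?_⟩
  set n := ⌈t - x⌉₊ + 1
  have hxn : t - n < x := by
    simp only [n, Nat.cast_add, Nat.cast_one]; linarith [Nat.le_ceil (t - x)]
  have hmem : Icc (t - n) t ∈ 𝓝[Iic t] x := by
    rw [← Iic_inter_Ici]
    exact inter_mem_nhdsWithin _ (Ici_mem_nhds hxn)
  exact ((hγ n).congr (hr n) x ⟨hxn.le, hx⟩).mono_of_mem_nhdsWithin hmem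

end IntegralCurve

section Scalar

variable {v : ℝ → ℝ → ℝ} {γ : ℝ → ℝ} {a b : ℝ}

theorem le_image_of_deriv_right_pos_of_eq {ρ ρ' : ℝ → ℝ} {B : ℝ}
    (hc : ContinuousOn ρ (Icc a b)) (hd : ∀ x ∈ Ico a b, HasDerivWithinAt ρ (ρ' x) (Ici x) x)
    (hB : ∀ x ∈ Ico a b, ρ x = B → 0 < ρ' x) (ha : B ≤ ρ a) : ∀ x ∈ Icc a b, B ≤ ρ x := by
  intro x hx
  have := image_le_of_deriv_right_lt_deriv_boundary' (f := fun y => -ρ y) (B := fun _ => -B)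
    hc.neg (fun y hy => (hd y hy).neg) (neg_le_neg ha) continuousOn_const
    (fun y _ => hasDerivWithinAt_const y _ (-B))
    (fun y hy h => neg_neg_iff_pos.2 (hB y hy (neg_inj.1 h))) hx
  exact neg_le_neg_iff.1 this

theorem IsIntegralCurveOn.le_add_mul_sub {K : ℝ} (h : IsIntegralCurveOn γ v (Icc a b))
    (hK : ∀ x ∈ Icc a b, |v x (γ x)| ≤ K) {x y : ℝ} (hx : x ∈ Icc a b) (hy : y ∈ Icc a b) :
    γ y ≤ γ x + K * (b - a) := by
  have hlip := (convex_Icc a b).norm_image_sub_le_of_norm_hasDerivWithin_le h hK hx hy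
  have hyx : |y - x| ≤ b - a :=
    abs_sub_le_iff.2 ⟨by linarith [hy.2, hx.1], by linarith [hx.2, hy.1]⟩
  rw [Real.norm_eq_abs, Real.norm_eq_abs] at hlip
  nlinarith [le_abs_self (γ y - γ x), (abs_nonneg _).trans (hK x hx)]

theorem IsIntegralCurveOn.add_mul_sub_le {m : ℝ} (h : IsIntegralCurveOn γ v (Icc a b))
    (hm : ∀ x ∈ Icc a b, v x (γ x) ≤ -m) {x : ℝ} (hx : x ∈ Icc a b) :
    γ b + m * (b - x) ≤ γ x := by
  have hlin : ∀ y, HasDerivAt (fun y => m * y) m y := fun y => by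
    simpa using (hasDerivAt_id y).const_mul m
  have hanti : AntitoneOn (fun y => γ y + m * y) (Icc a b) := by
    refine antitoneOn_of_hasDerivWithinAt_nonpos (f' := fun y => v y (γ y) + m) (convex_Icc a b)
      (h.continuousOn.add (continuous_const_mul m).continuousOn) (fun y hy => ?_) (fun y hy => ?_)
      <;> rw [interior_Icc] at *
    · exact ((h y (Ioo_subset_Icc_self hy)).mono Ioo_subset_Icc_self).add (hlin y).hasDerivWithinAt
    · linarith [hm y (Ioo_subset_Icc_self hy)]
  have := hanti hx ⟨hx.1.trans hx.2, le_rfl⟩ hx.2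
  linarith

theorem le_of_isIntegralCurveOn {S : Set ℝ} {K : ℝ≥0} {γ₁ γ₂ : ℝ → ℝ}
    (hv : ∀ x ∈ Icc a b, LipschitzOnWith K (v x) S)
    (h₁ : IsIntegralCurveOn γ₁ v (Icc a b)) (h₂ : IsIntegralCurveOn γ₂ v (Icc a b))
    (hS₁ : ∀ x ∈ Icc a b, γ₁ x ∈ S) (hS₂ : ∀ x ∈ Icc a b, γ₂ x ∈ S) (ha : γ₁ a ≤ γ₂ a) :
    ∀ x ∈ Icc a b, γ₁ x ≤ γ₂ x := by
  intro x hx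
  by_contra! hlt
  -- a crossing point `w`, after which both curves must coincide
  obtain ⟨w, hw, hweq⟩ : ∃ w ∈ Icc a x, (γ₂ - γ₁) w = 0 :=
    intermediate_value_Icc' hx.1 ((h₂.continuousOn.sub h₁.continuousOn).mono
      (Icc_subset_Icc_right hx.2)) ⟨sub_nonpos.2 hlt.le, sub_nonneg.2 ha⟩
  have hsub : Icc w x ⊆ Icc a b := Icc_subset_Icc hw.1 hx.2
  have := ODE_solution_unique_of_mem_Icc_right (fun y hy => hv y (hsub (Ico_subset_Icc_self hy)))
    (h₁.continuousOn.mono hsub) (h₁.hasDerivWithinAt_Ici hsub)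
    (fun y hy => hS₁ y (hsub (Ico_subset_Icc_self hy)))
    (h₂.continuousOn.mono hsub) (h₂.hasDerivWithinAt_Ici hsub)
    (fun y hy => hS₂ y (hsub (Ico_subset_Icc_self hy))) (sub_eq_zero.1 hweq).symm
    ⟨hw.2, le_rfl⟩
  linarith

end Scalar

def UniformlyLipschitzOnIcc (f : ℝ → ℝ → ℝ) : Prop :=
  ∀ a b : ℝ, 0 < a → ∃ L : ℝ≥0, ∀ x, LipschitzOnWith L (f x) (Icc a b)

section Field

variable {f : ℝ → ℝ → ℝ}

theorem uniformlyLipschitzOnIcc_of_abs_sub_le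
    (hlip : ∀ a b : ℝ, 0 < a → a < b → ∃ L > 0, ∀ x : ℝ,
      ∀ r₁ ∈ Icc a b, ∀ r₂ ∈ Icc a b, |f x r₁ - f x r₂| ≤ L * |r₁ - r₂|) :
    UniformlyLipschitzOnIcc f := by
  intro a b ha
  obtain ⟨L, hL, hLf⟩ := hlip a (max a b + 1) ha (by linarith [le_max_left a b])
  have hsub : Icc a b ⊆ Icc a (max a b + 1) := Icc_subset_Icc_right (by linarith [le_max_right a b])
  refine ⟨L.toNNReal, fun x => LipschitzOnWith.of_dist_le_mul fun r₁ h₁ r₂ h₂ => ?_⟩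
  rw [Real.dist_eq, Real.dist_eq, Real.coe_toNNReal _ hL.le]
  exact hLf x r₁ (hsub h₁) r₂ (hsub h₂)

theorem continuousAt_uncurry_of_pos
    (hf : ContinuousOn (fun p : ℝ × ℝ => f p.1 p.2) (univ ×ˢ Ioi 0)) (x : ℝ) {y : ℝ}
    (hy : 0 < y) :
    ContinuousAt (fun p : ℝ × ℝ => f p.1 p.2) (x, y) :=
  hf.continuousAt (prod_mem_nhds univ_mem (Ioi_mem_nhds hy))

theorem apply_pos_of_le {δ c : ℝ}
    (hf : ContinuousOn (fun p : ℝ × ℝ => f p.1 p.2) (univ ×ˢ Ioi 0)) (hc : 0 < c)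
    (hsmall : ∀ x r : ℝ, 0 < r → r < δ → c / (2 * r) ≤ f x r) :
    ∀ x r : ℝ, 0 < r → r ≤ δ → 0 < f x r := by
  intro x r hr hrδ
  rcases hrδ.lt_or_eq with hlt | rfl
  · exact (by positivity : 0 < c / (2 * r)).trans_le (hsmall x r hr hlt)
  -- at `r = δ` itself, pass to the limit `r → δ⁻` in `c / (2 * δ) ≤ c / (2 * r) ≤ f x r`
  have hcont : Tendsto (f x) (𝓝[<] r) (𝓝 (f x r)) :=
    ((continuousAt_uncurry_of_pos hf x hr).comp
      (continuous_const.prodMk continuous_id).continuousAt).tendsto.mono_left nhdsWithin_le_nhds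
  refine (by positivity : 0 < c / (2 * r)).trans_le (ge_of_tendsto hcont ?_)
  filter_upwards [Ioo_mem_nhdsLT hr] with y hy
  exact (div_le_div_of_nonneg_left hc.le (by linarith [hy.1]) (by linarith [hy.2])).trans
    (hsmall x y hy.1 hy.2)

theorem exists_isIntegralCurveOn_max
    (hf : ContinuousOn (fun p : ℝ × ℝ => f p.1 p.2) (univ ×ˢ Ioi 0))
    (hlip : UniformlyLipschitzOnIcc f) {B K : ℝ} (hB : 0 < B)
    (hbdd : ∀ x r : ℝ, B ≤ r → |f x r| ≤ K) {a b t₀ : ℝ} (ht₀ : t₀ ∈ Icc a b) (y₀ : ℝ) :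
    ∃ γ : ℝ → ℝ, γ t₀ = y₀ ∧ IsIntegralCurveOn γ (fun x y => f x (max B y)) (Icc a b) := by
  have hK : 0 ≤ K := (abs_nonneg _).trans (hbdd 0 B le_rfl)
  set R := K * max (b - t₀) (t₀ - a)
  have hR : 0 ≤ R := mul_nonneg hK (le_max_of_le_left (by linarith [ht₀.2]))
  obtain ⟨L, hL⟩ := hlip B (max B (y₀ + R)) hB
  have hPL : IsPicardLindelof (fun x y => f x (max B y)) (tmin := a) (tmax := b) ⟨t₀, ht₀⟩ y₀
      R.toNNReal 0 K.toNNReal L := by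
    refine ⟨fun x _ => ?_, fun y _ => ?_, fun x _ y _ => ?_, ?_⟩
    · rw [← mul_one L]
      refine (hL x).comp (LipschitzWith.id.const_max B).lipschitzOnWith fun y hy => ?_
      rw [Metric.mem_closedBall, Real.dist_eq, Real.coe_toNNReal _ hR, abs_le] at hy
      exact ⟨le_max_left _ _, max_le_max le_rfl (by linarith [hy.2])⟩
    · exact fun x _ => ((continuousAt_uncurry_of_pos hf x (hB.trans_le (le_max_left B y))).comp
        (f := fun x' => (x', max B y)) (by fun_prop)).continuousWithinAt
    · rw [Real.norm_eq_abs, Real.coe_toNNReal _ hK]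
      exact hbdd x _ (le_max_left _ _)
    · simp only [Real.coe_toNNReal _ hK, Real.coe_toNNReal _ hR, NNReal.coe_zero, sub_zero, R,
        le_refl]
  exact hPL.exists_eq_forall_mem_Icc_hasDerivWithinAt₀

theorem exists_forward_solution {δ K : ℝ}
    (hf : ContinuousOn (fun p : ℝ × ℝ => f p.1 p.2) (univ ×ˢ Ioi 0))
    (hlip : UniformlyLipschitzOnIcc f) (hδ : 0 < δ)
    (hpos : ∀ x r : ℝ, 0 < r → r ≤ δ → 0 < f x r) (hbdd : ∀ x r : ℝ, δ ≤ r → |f x r| ≤ K)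
    {s t y₀ : ℝ} (hst : s ≤ t) (hy₀ : δ ≤ y₀) :
    ∃ ρ : ℝ → ℝ, ρ s = y₀ ∧ IsIntegralCurveOn ρ f (Icc s t) ∧ ∀ x ∈ Icc s t, δ ≤ ρ x := by
  obtain ⟨ρ, hρs, hρ⟩ := exists_isIntegralCurveOn_max hf hlip hδ hbdd ⟨le_rfl, hst⟩ y₀
  have hδρ : ∀ x ∈ Icc s t, δ ≤ ρ x :=
    le_image_of_deriv_right_pos_of_eq hρ.continuousOn (hρ.hasDerivWithinAt_Ici subset_rfl)
      (fun x _ hx => by simpa only [hx, max_self] using hpos x δ hδ le_rfl) (hρs ▸ hy₀)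
  refine ⟨ρ, hρs, fun x hx => ?_, hδρ⟩
  simpa only [max_eq_right (hδρ x hx)] using hρ x hx

end Field

section Incoming

variable {f : ℝ → ℝ → ℝ}

theorem incomingSolutions_antitone : Antitone (incomingSolutions f) :=
  fun _ _ hst _ ⟨hpos, hcurve, htend⟩ =>
    ⟨fun x hx => hpos x (Iic_subset_Iic.2 hst hx),
      IsIntegralCurveOn.mono hcurve (Iic_subset_Iic.2 hst), htend⟩

theorem le_of_mem_incomingSolutions {δ : ℝ} (hpos : ∀ x r : ℝ, 0 < r → r ≤ δ → 0 < f x r)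
    {r : ℝ → ℝ} {t : ℝ} (hr : r ∈ incomingSolutions f t) {x : ℝ} (hx : x ≤ t) : δ ≤ r x := by
  obtain ⟨hrpos, hcurve, htend⟩ := hr
  obtain ⟨a, ha⟩ := (htend.eventually_ge_atTop δ).exists_forall_of_atBot
  have hsub : Icc (min a x) x ⊆ Iic t := fun y hy => hy.2.trans hx
  exact le_image_of_deriv_right_pos_of_eq (IsIntegralCurveOn.continuousOn hcurve |>.mono hsub)
    (IsIntegralCurveOn.hasDerivWithinAt_Ici hcurve hsub)
    (fun y hy hyδ => hpos y (r y) (hrpos y (hsub (Ico_subset_Icc_self hy))) hyδ.le)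
    (ha _ (min_le_left a x)) x ⟨min_le_right a x, le_rfl⟩

theorem exists_backward_solution {R₀ K : ℝ}
    (hf : ContinuousOn (fun p : ℝ × ℝ => f p.1 p.2) (univ ×ˢ Ioi 0))
    (hlip : UniformlyLipschitzOnIcc f) (hR₀ : 0 < R₀)
    (hlarge : ∀ x r : ℝ, R₀ ≤ r → f x r ≤ -(1 : ℝ) / 2) (hbdd : ∀ x r : ℝ, R₀ ≤ r → |f x r| ≤ K)
    {T : ℝ} (hT : 0 ≤ T) (t : ℝ) :
    ∃ γ : ℝ → ℝ, γ t = R₀ ∧ IsIntegralCurveOn γ f (Icc (t - T) t) ∧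
      ∀ x ∈ Icc (t - T) t, R₀ + (t - x) / 2 ≤ γ x ∧ γ x ≤ R₀ + K * T := by
  obtain ⟨γ, hγt, hγ⟩ := exists_isIntegralCurveOn_max hf hlip hR₀ hbdd
    (a := t - T) (b := t) ⟨by linarith, le_rfl⟩ R₀
  -- below `R₀` the truncated field is `f x R₀ ≤ -1/2`, so `γ` grows at least linearly backwards
  -- and never feels the truncation
  have hlow : ∀ x ∈ Icc (t - T) t, R₀ + (t - x) / 2 ≤ γ x := fun x hx => by
    have := hγ.add_mul_sub_le (m := 1 / 2)
      (fun y _ => by linarith [hlarge y (max R₀ (γ y)) (le_max_left _ _)]) hx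
    rw [hγt] at this
    linarith
  refine ⟨γ, hγt, fun x hx => ?_, fun x hx => ⟨hlow x hx, ?_⟩⟩
  · simpa only [max_eq_right (by linarith [hlow x hx, hx.2] : R₀ ≤ γ x)] using hγ x hx
  · have := hγ.le_add_mul_sub (fun y _ => hbdd y _ (le_max_left _ _))
      ⟨by linarith [hx.1], le_rfl⟩ hx
    rwa [hγt, sub_sub_cancel] at this

theorem exists_mem_incomingSolutions {R₀ K : ℝ}
    (hf : ContinuousOn (fun p : ℝ × ℝ => f p.1 p.2) (univ ×ˢ Ioi 0))
    (hlip : UniformlyLipschitzOnIcc f) (hR₀ : 0 < R₀)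
    (hlarge : ∀ x r : ℝ, R₀ ≤ r → f x r ≤ -(1 : ℝ) / 2) (hbdd : ∀ x r : ℝ, R₀ ≤ r → |f x r| ≤ K)
    (t : ℝ) : ∃ r ∈ incomingSolutions f t, r t = R₀ := by
  have hK : 0 ≤ K := (abs_nonneg _).trans (hbdd 0 R₀ le_rfl)
  choose γ hγt hγ hγb using fun n : ℕ =>
    exists_backward_solution hf hlip hR₀ hlarge hbdd n.cast_nonneg t
  have hcons : ∀ m n : ℕ, m ≤ n → EqOn (γ m) (γ n) (Icc (t - m) t) := fun m n hmn => by
    obtain ⟨L, hL⟩ := hlip R₀ (R₀ + K * n) hR₀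
    have hmn' : (m : ℝ) ≤ n := Nat.cast_le.2 hmn
    have hsub : Icc (t - m) t ⊆ Icc (t - n) t := Icc_subset_Icc_left (by linarith)
    have hband : ∀ k ≤ n, ∀ x ∈ Icc (t - k) t, γ k x ∈ Icc R₀ (R₀ + K * n) := fun k hk x hx =>
      ⟨by linarith [(hγb k x hx).1, hx.2], (hγb k x hx).2.trans (by gcongr)⟩
    exact ODE_solution_unique_of_mem_Icc_left (fun x _ => hL x) (hγ m).continuousOn
      ((hγ m).hasDerivWithinAt_Iic subset_rfl)
      (fun x hx => hband m hmn x (Ioc_subset_Icc_self hx))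
      ((hγ n).continuousOn.mono hsub) ((hγ n).hasDerivWithinAt_Iic hsub)
      (fun x hx => hband n le_rfl x (hsub (Ioc_subset_Icc_self hx))) (by rw [hγt, hγt])
  obtain ⟨r, hrγ, hr⟩ := exists_isIntegralCurveOn_Iic γ hγ hcons
  have hrlow : ∀ x ≤ t, R₀ + (t - x) / 2 ≤ r x := fun x hx => by
    have hmem : x ∈ Icc (t - ⌈t - x⌉₊) t := ⟨by linarith [Nat.le_ceil (t - x)], hx⟩
    exact hrγ _ hmem ▸ (hγb _ x hmem).1
  refine ⟨r, ⟨fun x hx => by linarith [hrlow x hx, mem_Iic.1 hx], hr, ?_⟩, ?_⟩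
  · refine tendsto_atTop_mono' atBot (eventually_le_atBot t |>.mono hrlow) ?_
    refine tendsto_atTop_add_const_left _ _ (Tendsto.atTop_div_const two_pos ?_)
    exact (tendsto_atTop_add_const_left _ t tendsto_neg_atBot_atTop).congr
      fun x => (sub_eq_add_neg t x).symm
  · simpa [hγt] using hrγ 0 ⟨by simp, le_rfl⟩

theorem exists_mem_incomingSolutions_of_le {δ K : ℝ}
    (hf : ContinuousOn (fun p : ℝ × ℝ => f p.1 p.2) (univ ×ˢ Ioi 0))
    (hlip : UniformlyLipschitzOnIcc f) (hδ : 0 < δ)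
    (hpos : ∀ x r : ℝ, 0 < r → r ≤ δ → 0 < f x r) (hbdd : ∀ x r : ℝ, δ ≤ r → |f x r| ≤ K)
    {r : ℝ → ℝ} {s t : ℝ} (hr : r ∈ incomingSolutions f s) (hst : s ≤ t) :
    ∃ r' ∈ incomingSolutions f t, r' s = r s := by
  obtain ⟨ρ, hρs, hρ, hρδ⟩ := exists_forward_solution hf hlip hδ hpos hbdd hst
    (le_of_mem_incomingSolutions hpos hr le_rfl)
  obtain ⟨hrpos, hrcurve, hrtend⟩ := hr
  refine ⟨fun x => if x ≤ s then r x else ρ x,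
    ⟨fun x hx => ?_, IsIntegralCurveOn.piecewise_Iic hrcurve hρ hρs.symm, ?_⟩, if_pos le_rfl⟩
  · dsimp only
    split_ifs with h
    · exact hrpos x h
    · exact hδ.trans_le (hρδ x ⟨(not_le.1 h).le, hx⟩)
  · exact hrtend.congr' ((eventually_le_atBot s).mono fun x hx => (if_pos hx).symm)

end Incoming

/-- The white hole horizon `R⁻(t)`. -/
noncomputable def whiteHoleHorizon (f : ℝ → ℝ → ℝ) (t : ℝ) : ℝ :=
  sInf ((fun r : ℝ → ℝ => r t) '' incomingSolutions f t)

section Horizon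

variable {f : ℝ → ℝ → ℝ} {δ K : ℝ}

theorem whiteHoleHorizon_le_of_mem (hpos : ∀ x r : ℝ, 0 < r → r ≤ δ → 0 < f x r)
    {r : ℝ → ℝ} {t : ℝ} (hr : r ∈ incomingSolutions f t) : whiteHoleHorizon f t ≤ r t :=
  csInf_le ⟨δ, by rintro _ ⟨r', hr', rfl⟩; exact le_of_mem_incomingSolutions hpos hr' le_rfl⟩
    (mem_image_of_mem _ hr)

theorem le_whiteHoleHorizon (hpos : ∀ x r : ℝ, 0 < r → r ≤ δ → 0 < f x r) {t : ℝ}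
    (hne : (incomingSolutions f t).Nonempty) : δ ≤ whiteHoleHorizon f t :=
  le_csInf (hne.image _) <| by
    rintro _ ⟨r, hr, rfl⟩
    exact le_of_mem_incomingSolutions hpos hr le_rfl

theorem apply_le_whiteHoleHorizon_of_isIntegralCurveOn
    (hlip : UniformlyLipschitzOnIcc f) (hδ : 0 < δ)
    (hpos : ∀ x r : ℝ, 0 < r → r ≤ δ → 0 < f x r) (hbdd : ∀ x r : ℝ, δ ≤ r → |f x r| ≤ K)
    {ρ : ℝ → ℝ} {s t : ℝ} (hρ : IsIntegralCurveOn ρ f (Icc s t)) (hρδ : ∀ x ∈ Icc s t, δ ≤ ρ x)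
    (hρs : ρ s ≤ whiteHoleHorizon f s) (hne : (incomingSolutions f t).Nonempty) (hst : s ≤ t) :
    ρ t ≤ whiteHoleHorizon f t := by
  refine le_csInf (hne.image _) ?_
  rintro _ ⟨r, hr, rfl⟩
  have hrI : IsIntegralCurveOn r f (Icc s t) := IsIntegralCurveOn.mono hr.2.1 fun x hx => hx.2
  have hrs : ρ s ≤ r s :=
    hρs.trans (whiteHoleHorizon_le_of_mem hpos (incomingSolutions_antitone hst hr))
  have hs : s ∈ Icc s t := ⟨le_rfl, hst⟩
  have hband : ∀ γ : ℝ → ℝ, IsIntegralCurveOn γ f (Icc s t) → (∀ x ∈ Icc s t, δ ≤ γ x) →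
      γ s ≤ r s → ∀ x ∈ Icc s t, γ x ∈ Icc δ (r s + K * (t - s)) := fun γ hγ hγδ hγs x hx =>
    ⟨hγδ x hx, (hγ.le_add_mul_sub (fun y hy => hbdd y _ (hγδ y hy)) hs hx).trans (by linarith)⟩
  obtain ⟨L, hL⟩ := hlip δ (r s + K * (t - s)) hδ
  exact le_of_isIntegralCurveOn (fun x _ => hL x) hρ hrI (hband ρ hρ hρδ hrs)
    (hband r hrI (fun x hx => le_of_mem_incomingSolutions hpos hr hx.2) le_rfl) hrs t ⟨hst, le_rfl⟩

theorem whiteHoleHorizon_le_apply_of_isIntegralCurveOn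
    (hf : ContinuousOn (fun p : ℝ × ℝ => f p.1 p.2) (univ ×ˢ Ioi 0))
    (hlip : UniformlyLipschitzOnIcc f) (hδ : 0 < δ)
    (hpos : ∀ x r : ℝ, 0 < r → r ≤ δ → 0 < f x r) (hbdd : ∀ x r : ℝ, δ ≤ r → |f x r| ≤ K)
    {ρ : ℝ → ℝ} {s t : ℝ} (hρ : IsIntegralCurveOn ρ f (Icc s t)) (hρδ : ∀ x ∈ Icc s t, δ ≤ ρ x)
    (hρs : ρ s = whiteHoleHorizon f s) (hne : (incomingSolutions f s).Nonempty) (hst : s ≤ t) :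
    whiteHoleHorizon f t ≤ ρ t := by
  by_contra! hlt
  have hs : s ∈ Icc s t := ⟨le_rfl, hst⟩
  set b := whiteHoleHorizon f s + 1 + K * (t - s)
  obtain ⟨L, hL⟩ := hlip δ b hδ
  set E := Real.exp (L * (t - s))
  have hE : 0 < E := Real.exp_pos _
  -- Gronwall: an incoming solution starting within `η` of `ρ` at time `s` ends within `η * E` of
  -- `ρ` at time `t`, and `η` can be made smaller than `(R⁻(t) - ρ t) / E`
  have hgap : 0 < (whiteHoleHorizon f t - ρ t) / E := div_pos (sub_pos.2 hlt) hE
  obtain ⟨_, ⟨r, hr, rfl⟩, hrs⟩ := exists_lt_of_csInf_lt (hne.image _)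
    (lt_min (lt_add_of_pos_right (whiteHoleHorizon f s) hgap) (lt_add_one (whiteHoleHorizon f s)))
  obtain ⟨hrX, hr1⟩ := lt_min_iff.1 hrs
  obtain ⟨r', hr', hr's⟩ := exists_mem_incomingSolutions_of_le hf hlip hδ hpos hbdd hr hst
  have hr'I : IsIntegralCurveOn r' f (Icc s t) := IsIntegralCurveOn.mono hr'.2.1 fun x hx => hx.2
  have hband : ∀ γ : ℝ → ℝ, IsIntegralCurveOn γ f (Icc s t) → (∀ x ∈ Icc s t, δ ≤ γ x) →
      γ s ≤ whiteHoleHorizon f s + 1 → ∀ x ∈ Ico s t, γ x ∈ Icc δ b := fun γ hγ hγδ hγs x hx =>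
    ⟨hγδ x (Ico_subset_Icc_self hx), (hγ.le_add_mul_sub (fun y hy => hbdd y _ (hγδ y hy)) hs
      (Ico_subset_Icc_self hx)).trans (by linarith)⟩
  have hdist := dist_le_of_trajectories_ODE_of_mem (fun x _ => hL x) hr'I.continuousOn
    (hr'I.hasDerivWithinAt_Ici subset_rfl)
    (hband r' hr'I (fun x hx => le_of_mem_incomingSolutions hpos hr' hx.2) (by linarith))
    hρ.continuousOn (hρ.hasDerivWithinAt_Ici subset_rfl) (hband ρ hρ hρδ (by linarith))
    le_rfl t ⟨hst, le_rfl⟩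
  have hrs' : whiteHoleHorizon f s ≤ r s := whiteHoleHorizon_le_of_mem hpos hr
  rw [Real.dist_eq, Real.dist_eq, hr's, hρs, abs_of_nonneg (sub_nonneg.2 hrs')] at hdist
  refine lt_irrefl (whiteHoleHorizon f t) ?_
  calc whiteHoleHorizon f t ≤ r' t := whiteHoleHorizon_le_of_mem hpos hr'
    _ ≤ ρ t + (r s - whiteHoleHorizon f s) * E := by linarith [le_abs_self (r' t - ρ t)]
    _ < ρ t + (whiteHoleHorizon f t - ρ t) / E * E := by gcongr; linarith
    _ = whiteHoleHorizon f t := by rw [div_mul_cancel₀ _ hE.ne']; ring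

theorem hasDerivAt_whiteHoleHorizon
    (hf : ContinuousOn (fun p : ℝ × ℝ => f p.1 p.2) (univ ×ˢ Ioi 0))
    (hlip : UniformlyLipschitzOnIcc f) (hδ : 0 < δ)
    (hpos : ∀ x r : ℝ, 0 < r → r ≤ δ → 0 < f x r) (hbdd : ∀ x r : ℝ, δ ≤ r → |f x r| ≤ K)
    (hne : ∀ t, (incomingSolutions f t).Nonempty) (x : ℝ) :
    HasDerivAt (whiteHoleHorizon f) (f x (whiteHoleHorizon f x)) x := by
  obtain ⟨ρ, hρs, hρ, hρδ⟩ := exists_forward_solution hf hlip hδ hpos hbdd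
    (by linarith : x - 1 ≤ x + 1) (le_whiteHoleHorizon hpos (hne (x - 1)))
  have heq : EqOn (whiteHoleHorizon f) ρ (Icc (x - 1) (x + 1)) := fun t ht => by
    have hsub : Icc (x - 1) t ⊆ Icc (x - 1) (x + 1) := Icc_subset_Icc_right ht.2
    exact le_antisymm
      (whiteHoleHorizon_le_apply_of_isIntegralCurveOn hf hlip hδ hpos hbdd (hρ.mono hsub)
        (fun y hy => hρδ y (hsub hy)) hρs (hne _) ht.1)
      (apply_le_whiteHoleHorizon_of_isIntegralCurveOn hlip hδ hpos hbdd (hρ.mono hsub)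
        (fun y hy => hρδ y (hsub hy)) hρs.le (hne t) ht.1)
  have hnhds : Icc (x - 1) (x + 1) ∈ 𝓝 x := Icc_mem_nhds (by linarith) (by linarith)
  have hx : x ∈ Icc (x - 1) (x + 1) := mem_of_mem_nhds hnhds
  rw [heq hx]
  exact ((hρ x hx).hasDerivAt hnhds).congr_of_eventuallyEq (eventually_of_mem hnhds heq)

end Horizon

theorem white_hole_horizon_exists_general (f : ℝ → ℝ → ℝ)
    (hf : ContinuousOn (fun p : ℝ × ℝ => f p.1 p.2) (Set.univ ×ˢ Set.Ioi 0))
    (hlip : ∀ a b : ℝ, 0 < a → a < b → ∃ L > 0, ∀ x : ℝ,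
      ∀ r₁ ∈ Set.Icc a b, ∀ r₂ ∈ Set.Icc a b, |f x r₁ - f x r₂| ≤ L * |r₁ - r₂|)
    (δ c R₀ K : ℝ) (hδ : 0 < δ) (hc : 0 < c)
    (hsmall : ∀ x r : ℝ, 0 < r → r < δ → c / (2 * r) ≤ f x r)
    (hR₀ : δ < R₀) (hlarge : ∀ x r : ℝ, R₀ ≤ r → f x r ≤ -(1 : ℝ) / 2)
    (hbdd : ∀ x r : ℝ, δ ≤ r → |f x r| ≤ K) :
    ∃ m M : ℝ, 0 < m ∧ m ≤ M ∧
      ∃ R : ℝ → ℝ,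
        (∀ x, m ≤ R x ∧ R x ≤ M) ∧
        (∀ x, HasDerivAt R (f x (R x)) x) ∧
        ∀ t : ℝ, R t = sInf ((fun r : ℝ → ℝ => r t) '' incomingSolutions f t) := by
  have hlip' := uniformlyLipschitzOnIcc_of_abs_sub_le hlip
  have hpos := apply_pos_of_le hf hc hsmall
  have hincoming : ∀ t, ∃ r ∈ incomingSolutions f t, r t = R₀ :=
    exists_mem_incomingSolutions hf hlip' (hδ.trans hR₀) hlarge
      fun x r hr => hbdd x r (hR₀.le.trans hr)
  have hne : ∀ t, (incomingSolutions f t).Nonempty := fun t =>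
    (hincoming t).imp fun _ h => h.1
  refine ⟨δ, R₀, hδ, hR₀.le, whiteHoleHorizon f, fun t => ⟨le_whiteHoleHorizon hpos (hne t), ?_⟩,
    hasDerivAt_whiteHoleHorizon hf hlip' hδ hpos hbdd hne, fun t => rfl⟩
  obtain ⟨r, hr, hrt⟩ := hincoming t
  exact hrt ▸ whiteHoleHorizon_le_of_mem hpos hr

/-- Remark 4.1 (white-hole analogue of Theorem 4.2): for the incoming
characteristic ODE `r' = f(x₀, r)` with `f ≥ c/(2r)` near `r = 0` and `f ≤ -1/2`
for large `r`, there is a global positive bounded solution `R⁻` which at each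
time `t` equals the infimum of the values at `t` of all solutions tending to
`+∞` as `x → -∞`. -/
theorem white_hole_horizon_exists (f : ℝ → ℝ → ℝ)
    (hf : ContinuousOn (fun p : ℝ × ℝ => f p.1 p.2) (Set.univ ×ˢ Set.Ioi 0))
    (hlip : ∀ a b : ℝ, 0 < a → a < b → ∃ L > 0, ∀ x : ℝ,
      ∀ r₁ ∈ Set.Icc a b, ∀ r₂ ∈ Set.Icc a b, |f x r₁ - f x r₂| ≤ L * |r₁ - r₂|)
    (δ c R₀ K : ℝ) (hδ : 0 < δ) (hc : 0 < c)
    (hsmall : ∀ x r : ℝ, 0 < r → r < δ → c / (2 * r) ≤ f x r)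
    (hR₀ : δ < R₀) (hlarge : ∀ x r : ℝ, R₀ ≤ r → f x r ≤ -(1 : ℝ) / 2)
    (hK : 0 < K) (hbdd : ∀ x r : ℝ, δ ≤ r → |f x r| ≤ K) :
    ∃ m M : ℝ, 0 < m ∧ m ≤ M ∧
      ∃ R : ℝ → ℝ,
        (∀ x, m ≤ R x ∧ R x ≤ M) ∧
        (∀ x, HasDerivAt R (f x (R x)) x) ∧
        ∀ t : ℝ, R t = sInf ((fun r : ℝ → ℝ => r t) '' incomingSolutions f t) :=
  white_hole_horizon_exists_general f hf hlip δ c R₀ K hδ hc hsmall hR₀ hlarge hbdd
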